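/- Let Â₁₁ ∈ 𝒩⪰ʳ be the minimizer of ‖A₁₁Σ₁ − U₁ᵀBV₁‖_F² over 𝒩⪰ʳ and Z = U₂ᵀBV₁Σ₁⁻¹. Then the matrix A = U [[Â₁₁, −Zᵀ],[Z, 0]] Uᵀ lies in 𝒩⪰ⁿ and attains the infimum of ‖AX − B‖_F² over 𝒩⪰ⁿ; in particular its symmetric part [[Ĥ₁₁,0],[0,0]] (conjugated by U) is positive semidefinite. -/
import Mathlib


open Matrix

/-- Squared Frobenius norm. -/
noncomputable def frobSq {m n : Type*} [Fintype m] [Fintype n] (A : Matrix m n ℝ) : ℝ :=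
  ∑ i, ∑ j, (A i j) ^ 2

lemma frobSq_nonneg {m n : Type*} [Fintype m] [Fintype n] (A : Matrix m n ℝ) :
    0 ≤ frobSq A :=
  Finset.sum_nonneg fun _ _ => Finset.sum_nonneg fun _ _ => sq_nonneg _

lemma frobSq_eq_trace {m n : Type*} [Fintype m] [Fintype n] (A : Matrix m n ℝ) :
    frobSq A = Matrix.trace (Aᵀ * A) := by
  simp only [frobSq, Matrix.trace, Matrix.mul_apply, Matrix.diag, Matrix.transpose_apply, sq]
  exact Finset.sum_comm

lemma frobSq_transpose {m n : Type*} [Fintype m] [Fintype n] (A : Matrix m n ℝ) :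
    frobSq Aᵀ = frobSq A := by
  simp only [frobSq, Matrix.transpose_apply]
  exact Finset.sum_comm

lemma frobSq_zero {m n : Type*} [Fintype m] [Fintype n] :
    frobSq (0 : Matrix m n ℝ) = 0 := by
  simp [frobSq]

lemma frobSq_split_left {n m r p : Type*} [Fintype n] [Fintype m] [Fintype r] [Fintype p] [DecidableEq n]
    (U₁ : Matrix n r ℝ) (U₂ : Matrix n p ℝ) (h : U₁ * U₁ᵀ + U₂ * U₂ᵀ = 1)
    (M : Matrix n m ℝ) :
    frobSq M = frobSq (U₁ᵀ * M) + frobSq (U₂ᵀ * M) := by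
  rw [frobSq_eq_trace, frobSq_eq_trace, frobSq_eq_trace]
  have h1 : Mᵀ * M = Mᵀ * (U₁ * U₁ᵀ) * M + Mᵀ * (U₂ * U₂ᵀ) * M := by
    rw [← Matrix.add_mul, ← Matrix.mul_add, h, Matrix.mul_one]
  rw [h1, Matrix.trace_add]
  congr 1 <;> simp [Matrix.transpose_mul, Matrix.mul_assoc]

lemma frobSq_split_right {n m r q : Type*} [Fintype n] [Fintype m] [Fintype r] [Fintype q] [DecidableEq m]
    (V₁ : Matrix m r ℝ) (V₂ : Matrix m q ℝ) (h : V₁ * V₁ᵀ + V₂ * V₂ᵀ = 1)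
    (M : Matrix n m ℝ) :
    frobSq M = frobSq (M * V₁) + frobSq (M * V₂) := by
  rw [← frobSq_transpose M, frobSq_split_left V₁ V₂ h Mᵀ,
    ← frobSq_transpose (M * V₁), ← frobSq_transpose (M * V₂), Matrix.transpose_mul,
    Matrix.transpose_mul]

/-- the matrix `A = U [[Â₁₁, −Zᵀ],[Z, 0]] Uᵀ` with `Z = U₂ᵀBV₁Σ₁⁻¹`
belongs to `𝒩⪰ⁿ` and attains the infimum; its symmetric part is
`U [[Ĥ₁₁,0],[0,0]] Uᵀ` which is positive semidefinite. Here `p = n − r`, `q = m − r`. -/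
theorem nspsdp_explicit_minimizer {n m r p q : ℕ}
    (X B : Matrix (Fin n) (Fin m) ℝ)
    (U₁ : Matrix (Fin n) (Fin r) ℝ) (U₂ : Matrix (Fin n) (Fin p) ℝ)
    (V₁ : Matrix (Fin m) (Fin r) ℝ) (V₂ : Matrix (Fin m) (Fin q) ℝ)
    (S1 : Matrix (Fin r) (Fin r) ℝ)
    (hU1 : U₁ᵀ * U₁ = 1) (hU2 : U₂ᵀ * U₂ = 1) (hU12 : U₁ᵀ * U₂ = 0)
    (hUfull : U₁ * U₁ᵀ + U₂ * U₂ᵀ = 1)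
    (hV1 : V₁ᵀ * V₁ = 1) (hV2 : V₂ᵀ * V₂ = 1) (hV12 : V₁ᵀ * V₂ = 0)
    (hVfull : V₁ * V₁ᵀ + V₂ * V₂ᵀ = 1)
    (hS1 : IsUnit S1)
    (hSVD : X = U₁ * S1 * V₁ᵀ)
    (A11 : Matrix (Fin r) (Fin r) ℝ)
    (hA11psd : (A11 + A11ᵀ).PosSemidef)
    (hA11min : ∀ A' : Matrix (Fin r) (Fin r) ℝ, (A' + A'ᵀ).PosSemidef →
      frobSq (A11 * S1 - U₁ᵀ * B * V₁) ≤ frobSq (A' * S1 - U₁ᵀ * B * V₁)) :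
    let Z : Matrix (Fin p) (Fin r) ℝ := U₂ᵀ * B * V₁ * S1⁻¹
    let A : Matrix (Fin n) (Fin n) ℝ :=
      U₁ * A11 * U₁ᵀ + U₂ * Z * U₁ᵀ - U₁ * Zᵀ * U₂ᵀ
    (A + Aᵀ).PosSemidef ∧
    (A + Aᵀ) = U₁ * (A11 + A11ᵀ) * U₁ᵀ ∧
    (∀ A' : Matrix (Fin n) (Fin n) ℝ, (A' + A'ᵀ).PosSemidef →
      frobSq (A * X - B) ≤ frobSq (A' * X - B)) := by
  intro Z A
  have hU21 : U₂ᵀ * U₁ = 0 := by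
    have := congrArg Matrix.transpose hU12
    simpa using this
  have hV21 : V₂ᵀ * V₁ = 0 := by
    have := congrArg Matrix.transpose hV12
    simpa using this
  have hSinv : S1⁻¹ * S1 = 1 :=
    Matrix.nonsing_inv_mul S1 ((Matrix.isUnit_iff_isUnit_det S1).mp hS1)
  -- reassociated orthogonality lemmas
  have hU1' : ∀ {k : Type} (C : Matrix (Fin r) k ℝ), U₁ᵀ * (U₁ * C) = C := fun C => by
    rw [← Matrix.mul_assoc, hU1, Matrix.one_mul]
  have hU2' : ∀ {k : Type} (C : Matrix (Fin p) k ℝ), U₂ᵀ * (U₂ * C) = C := fun C => by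
    rw [← Matrix.mul_assoc, hU2, Matrix.one_mul]
  have hU12' : ∀ {k : Type} [Fintype k] (C : Matrix (Fin p) k ℝ), U₁ᵀ * (U₂ * C) = 0 :=
    fun C => by rw [← Matrix.mul_assoc, hU12, Matrix.zero_mul]
  have hU21' : ∀ {k : Type} [Fintype k] (C : Matrix (Fin r) k ℝ), U₂ᵀ * (U₁ * C) = 0 :=
    fun C => by rw [← Matrix.mul_assoc, hU21, Matrix.zero_mul]
  have hS1' : ∀ {k : Type} (C : Matrix (Fin r) k ℝ), S1⁻¹ * (S1 * C) = C := fun C => by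
    rw [← Matrix.mul_assoc, hSinv, Matrix.one_mul]
  have hsym : A + Aᵀ = U₁ * (A11 + A11ᵀ) * U₁ᵀ := by
    show (U₁ * A11 * U₁ᵀ + U₂ * Z * U₁ᵀ - U₁ * Zᵀ * U₂ᵀ) +
        (U₁ * A11 * U₁ᵀ + U₂ * Z * U₁ᵀ - U₁ * Zᵀ * U₂ᵀ)ᵀ = _
    simp only [Matrix.transpose_add, Matrix.transpose_sub, Matrix.transpose_mul,
      Matrix.transpose_transpose, Matrix.mul_add, Matrix.add_mul, Matrix.mul_assoc]
    abel
  have hpsd : (A + Aᵀ).PosSemidef := by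
    rw [hsym]
    have := hA11psd.mul_mul_conjTranspose_same U₁
    simpa [Matrix.conjTranspose_eq_transpose_of_trivial] using this
  refine ⟨hpsd, hsym, ?_⟩
  intro A' hA'
  have expand : ∀ N : Matrix (Fin n) (Fin m) ℝ,
      frobSq N = (frobSq (U₁ᵀ * N * V₁) + frobSq (U₁ᵀ * N * V₂)) +
        (frobSq (U₂ᵀ * N * V₁) + frobSq (U₂ᵀ * N * V₂)) := by
    intro N
    rw [frobSq_split_left U₁ U₂ hUfull N, frobSq_split_right V₁ V₂ hVfull (U₁ᵀ * N),
      frobSq_split_right V₁ V₂ hVfull (U₂ᵀ * N)]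
  rw [expand (A * X - B), expand (A' * X - B)]
  -- compute the blocks of A * X - B
  have b11 : U₁ᵀ * (A * X - B) * V₁ = A11 * S1 - U₁ᵀ * B * V₁ := by
    show U₁ᵀ * ((U₁ * A11 * U₁ᵀ + U₂ * Z * U₁ᵀ - U₁ * Zᵀ * U₂ᵀ) * X - B) * V₁ = _
    rw [hSVD]
    simp only [Z, Matrix.sub_mul, Matrix.add_mul, Matrix.mul_sub, Matrix.mul_add,
      Matrix.mul_assoc, hU1', hU2', hU12', hU21', hS1', hV1, hV12, hV21,
      Matrix.mul_one, Matrix.mul_zero, Matrix.zero_mul, zero_sub, sub_zero,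
      add_zero, zero_add]
  have b21 : U₂ᵀ * (A * X - B) * V₁ = 0 := by
    show U₂ᵀ * ((U₁ * A11 * U₁ᵀ + U₂ * Z * U₁ᵀ - U₁ * Zᵀ * U₂ᵀ) * X - B) * V₁ = _
    rw [hSVD]
    simp only [Z, Matrix.sub_mul, Matrix.add_mul, Matrix.mul_sub, Matrix.mul_add,
      Matrix.mul_assoc, hU1', hU2', hU12', hU21', hS1', hV1, hV12, hV21,
      Matrix.mul_one, Matrix.mul_zero, Matrix.zero_mul, zero_sub, sub_zero,
      add_zero, zero_add, sub_self]
  have b12 : U₁ᵀ * (A * X - B) * V₂ = -(U₁ᵀ * B * V₂) := by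
    show U₁ᵀ * ((U₁ * A11 * U₁ᵀ + U₂ * Z * U₁ᵀ - U₁ * Zᵀ * U₂ᵀ) * X - B) * V₂ = _
    rw [hSVD]
    simp only [Z, Matrix.sub_mul, Matrix.add_mul, Matrix.mul_sub, Matrix.mul_add,
      Matrix.mul_assoc, hU1', hU2', hU12', hU21', hS1', hV1, hV12, hV21, hV2,
      Matrix.mul_one, Matrix.mul_zero, Matrix.zero_mul, zero_sub, sub_zero,
      add_zero, zero_add]
  have b22 : U₂ᵀ * (A * X - B) * V₂ = -(U₂ᵀ * B * V₂) := by
    show U₂ᵀ * ((U₁ * A11 * U₁ᵀ + U₂ * Z * U₁ᵀ - U₁ * Zᵀ * U₂ᵀ) * X - B) * V₂ = _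
    rw [hSVD]
    simp only [Z, Matrix.sub_mul, Matrix.add_mul, Matrix.mul_sub, Matrix.mul_add,
      Matrix.mul_assoc, hU1', hU2', hU12', hU21', hS1', hV1, hV12, hV21, hV2,
      Matrix.mul_one, Matrix.mul_zero, Matrix.zero_mul, zero_sub, sub_zero,
      add_zero, zero_add]
  -- blocks of A' * X - B
  have c11 : U₁ᵀ * (A' * X - B) * V₁ = (U₁ᵀ * A' * U₁) * S1 - U₁ᵀ * B * V₁ := by
    rw [hSVD]
    simp only [Matrix.sub_mul, Matrix.mul_sub, Matrix.mul_assoc, hV1,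
      Matrix.mul_one]
  have c12 : U₁ᵀ * (A' * X - B) * V₂ = -(U₁ᵀ * B * V₂) := by
    rw [hSVD]
    simp only [Matrix.sub_mul, Matrix.mul_sub, Matrix.mul_assoc, hV12,
      Matrix.mul_zero, zero_sub]
  have c22 : U₂ᵀ * (A' * X - B) * V₂ = -(U₂ᵀ * B * V₂) := by
    rw [hSVD]
    simp only [Matrix.sub_mul, Matrix.mul_sub, Matrix.mul_assoc, hV12,
      Matrix.mul_zero, zero_sub]
  rw [b11, b12, b21, b22, c11, c12, c22, frobSq_zero]
  have hpsd' : ((U₁ᵀ * A' * U₁) + (U₁ᵀ * A' * U₁)ᵀ).PosSemidef := by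
    have h1 : (U₁ᵀ * A' * U₁) + (U₁ᵀ * A' * U₁)ᵀ = U₁ᵀ * (A' + A'ᵀ) * U₁ := by
      simp only [Matrix.transpose_mul, Matrix.transpose_transpose, Matrix.mul_add,
        Matrix.add_mul, Matrix.mul_assoc]
    rw [h1]
    have := hA'.conjTranspose_mul_mul_same U₁
    simpa [Matrix.conjTranspose_eq_transpose_of_trivial] using this
  have hmin := hA11min (U₁ᵀ * A' * U₁) hpsd'
  have hz := frobSq_nonneg (U₂ᵀ * (A' * X - B) * V₁)
  linarith
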